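/- arXiv:1307.0369 — 2 statements merged into one kernel-verified Lean document; each statement's English description precedes it below -/
import Mathlib

section
/- Let (R, m, k) be an artinian commutative noetherian local ring, and set ρ = len_R(R) · dim_k Hom_R(k, R). Then every semidualizing R-module C satisfies len_R(C) ≤ ρ. -/
/-!
STATEMENT 5: For an artinian commutative noetherian local ring (R, m, k) and
ρ = len_R(R) · dim_k Hom_R(k, R), every semidualizing R-module C satisfies
len_R(C) ≤ ρ.
-/

open CategoryTheory

/-- `Ext^i_R(M, N)` for `R`-modules `M`, `N`. -/
noncomputable def extMod (R : Type) [CommRing R] (M N : ModuleCat R) (i : ℕ) : ModuleCat R :=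
  ((Ext R (ModuleCat R) i).obj (Opposite.op M)).obj N

/-- A finitely generated `R`-module `C` is semidualizing if the homothety map
`R → Hom_R(C, C)` is bijective and `Ext^i_R(C, C) = 0` for all `i ≥ 1`. -/
def IsSemidualizing (R : Type) [CommRing R] (C : Type) [AddCommGroup C] [Module R C] :
    Prop :=
  Module.Finite R C ∧
    Function.Bijective (LinearMap.lsmul R C) ∧
    ∀ i : ℕ, 1 ≤ i → Subsingleton (extMod R (ModuleCat.of R C) (ModuleCat.of R C) i)

/-- The length of an `R`-module, encoded as the Krull dimension of its lattice of
submodules (for modules of finite length this is the usual Jordan–Hölder length). -/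
noncomputable def moduleLength (R : Type) [CommRing R] (M : Type) [AddCommGroup M]
    [Module R M] : WithBot ℕ∞ :=
  Order.krullDim (Submodule R M)

/-! Since `R ≅ Hom_R(C, C)`, adjunction gives `Hom_R(k, R) ≅ Hom_R(k ⊗ C, C) ≅ Hom_R(k, C)^μ`,
where `μ = dim_k (k ⊗ C)` is the minimal number of generators of `C`. As `R` is artinian and
`C ≠ 0`, the maximal ideal is an associated prime of `C`, so `Hom_R(k, C) ≠ 0` and hence
`μ ≤ len Hom_R(k, R)`. Finally `C` is a quotient of `R^μ`, so `len C ≤ μ · len R`. -/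

open IsLocalRing Module TensorProduct

variable {R : Type*} [CommRing R]

noncomputable def homEquivHomTensorOfBijectiveLsmul {C : Type*} [AddCommGroup C] [Module R C]
    (hC : Function.Bijective (LinearMap.lsmul R C)) (N : Type*) [AddCommGroup N] [Module R N] :
    (N →ₗ[R] R) ≃ₗ[R] (N ⊗[R] C →ₗ[R] C) :=
  (LinearEquiv.congrRight (LinearEquiv.ofBijective _ hC)).trans (lift.equiv (RingHom.id R) N C C)

namespace IsLocalRing

variable [IsLocalRing R] {M : Type*} [AddCommGroup M] [Module R M]

theorem exists_surjective_of_finrank_residueField_tensor [Module.Finite R M] :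
    ∃ f : (Fin (finrank (ResidueField R) (ResidueField R ⊗[R] M)) → R) →ₗ[R] M,
      Function.Surjective f := by
  let b := Module.finBasis (ResidueField R) (ResidueField R ⊗[R] M)
  choose g hg using fun i ↦ mk_surjective R M (ResidueField R) residue_surjective (b i)
  refine ⟨Fintype.linearCombination R g, ?_⟩
  rw [← LinearMap.range_eq_top, Fintype.range_linearCombination]
  exact span_eq_top_of_tmul_eq_basis g b hg

theorem length_le_finrank_residueField_tensor_mul [Module.Finite R M] :
    length R M ≤ finrank (ResidueField R) (ResidueField R ⊗[R] M) * length R R := by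
  obtain ⟨f, hf⟩ := exists_surjective_of_finrank_residueField_tensor (R := R) (M := M)
  simpa using length_le_of_surjective f hf

theorem nontrivial_hom_residueField [IsArtinianRing R] [Nontrivial M] :
    Nontrivial (ResidueField R →ₗ[R] M) := by
  obtain ⟨p, hp⟩ := associatedPrimes.nonempty R M
  obtain ⟨_, f, hf⟩ := (isAssociatedPrime_iff_exists_injective_linearMap p M).mp hp
  obtain rfl : p = maximalIdeal R := eq_maximalIdeal (IsArtinianRing.isMaximal_of_isPrime p)
  exact nontrivial_of_ne f 0 fun h ↦ zero_ne_one (hf (by rw [h]; rfl : f 0 = f 1))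

variable {C : Type*} [AddCommGroup C] [Module R C] [Module.Finite R C]

noncomputable def homResidueFieldEquivPiOfBijectiveLsmul
    (hC : Function.Bijective (LinearMap.lsmul R C)) :
    (ResidueField R →ₗ[R] R) ≃ₗ[R]
      (Fin (finrank (ResidueField R) (ResidueField R ⊗[R] C)) → (ResidueField R →ₗ[R] C)) :=
  (homEquivHomTensorOfBijectiveLsmul hC _).trans <|
    (LinearEquiv.arrowCongr
      ((Module.finBasis (ResidueField R) _).equivFun.restrictScalars R) (.refl R C)).trans
      (LinearMap.lsum R (fun _ ↦ ResidueField R) R).symm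

theorem length_hom_residueField_eq_of_bijective_lsmul
    (hC : Function.Bijective (LinearMap.lsmul R C)) :
    length R (ResidueField R →ₗ[R] R) =
      finrank (ResidueField R) (ResidueField R ⊗[R] C) * length R (ResidueField R →ₗ[R] C) := by
  simpa using (homResidueFieldEquivPiOfBijectiveLsmul hC).length_eq

theorem length_le_length_mul_length_hom_residueField [IsArtinianRing R]
    (hC : Function.Bijective (LinearMap.lsmul R C)) :
    length R C ≤ length R R * length R (ResidueField R →ₗ[R] R) := by
  have : Nontrivial C := by
    by_contra!
    exact zero_ne_one (hC.injective (Subsingleton.elim _ _))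
  have : Nontrivial (ResidueField R →ₗ[R] C) := nontrivial_hom_residueField
  calc length R C ≤ finrank (ResidueField R) (ResidueField R ⊗[R] C) * length R R :=
        length_le_finrank_residueField_tensor_mul
    _ ≤ length R (ResidueField R →ₗ[R] R) * length R R := by
        rw [length_hom_residueField_eq_of_bijective_lsmul hC]
        gcongr
        exact le_mul_of_one_le_right' (Order.one_le_iff_pos.mpr length_pos)
    _ = length R R * length R (ResidueField R →ₗ[R] R) := mul_comm _ _

end IsLocalRing

/-- `Hom_R(k, R)` is a `k`-vector space, so its length over `R` is its dimension over `k`. -/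
theorem length_le_of_semidualizing_general
    (R : Type) [CommRing R] [IsLocalRing R] [IsArtinianRing R]
    (C : Type) [AddCommGroup C] [Module R C] (hC : IsSemidualizing R C) :
    moduleLength R C ≤
      moduleLength R R * moduleLength R (IsLocalRing.ResidueField R →ₗ[R] R) := by
  have := hC.1
  simp only [moduleLength, ← coe_length]
  exact_mod_cast length_le_length_mul_length_hom_residueField hC.2.1

/-- Over an artinian local ring `(R, m, k)`, every semidualizing module `C` satisfies
`len_R(C) ≤ ρ := len_R(R) · dim_k Hom_R(k, R)`.  Note that `Hom_R(k, R)` is a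
`k`-vector space, so its dimension over `k` equals its length over `R`. -/
theorem length_le_of_semidualizing
    (R : Type) [CommRing R] [IsNoetherianRing R] [IsLocalRing R] [IsArtinianRing R]
    (C : Type) [AddCommGroup C] [Module R C] (hC : IsSemidualizing R C) :
    moduleLength R C ≤
      moduleLength R R * moduleLength R (IsLocalRing.ResidueField R →ₗ[R] R) :=
  length_le_of_semidualizing_general R C hC
end

section
/- (Hilbert–Burch, converse direction) Let (R, m) be a commutative noetherian local ring and A an (n+1) × n matrix over R with grade(I_n(A)) ≥ 2. Then R/I_n(A) has a free resolution 0 → Rⁿ →A R^{n+1} →B R → 0, where B is the 1 × (n+1) matrix whose i-th entry is (−1)^{i−1} det(A_i). -/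
open CategoryTheory

/-- `I_n(A)`: the ideal of `n × n` minors of an `(n+1) × n` matrix `A`; these are the
determinants of the matrices `A_i` obtained by deleting the `i`-th row of `A`. -/
noncomputable def minorsIdeal {R : Type} [CommRing R] {n : ℕ}
    (A : Matrix (Fin (n + 1)) (Fin n) R) : Ideal R :=
  Ideal.span (Set.range fun i : Fin (n + 1) => (A.submatrix i.succAbove id).det)

/-- The linear map `R^{n+1} → R` given by a row vector `b`. -/
noncomputable def rowMap {R : Type} [CommRing R] {n : ℕ} (b : Fin (n + 1) → R) :
    (Fin (n + 1) → R) →ₗ[R] R :=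
  ∑ i, b i • LinearMap.proj i

/-- `grade_R I ≥ 2`, via `grade_R I = min {i | Ext^i_R(R/I, R) ≠ 0}`. -/
def gradeGEtwo (R : Type) [CommRing R] (I : Ideal R) : Prop :=
  ∀ i : ℕ, i < 2 → Subsingleton (extMod R (ModuleCat.of R (R ⧸ I)) (ModuleCat.of R R) i)

/-!
A matrix computation shows, with no hypothesis on `R`, that `B A = 0`, that each minor `det A_i`
kills `ker A`, and (via the adjugate of the square matrix `[x | A]`) that each minor multiplies
`ker B` into `im A`; moreover `im B = I_n(A)`. The grade hypothesis supplies the rest: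
`Ext⁰(R/I, R) = 0` says that `I` has zero annihilator, so `ker A`, being killed by `I`, is zero;
`Ext¹(R/I, R) = 0` says that every `R`-linear map `I → R` is a multiplication. For `x ∈ ker B`
the map `a ↦ A⁻¹(a x)` from `I` to `Rⁿ` is therefore multiplication by some `y`, so `I` kills
`x - A y`, and `x = A y`.
-/

open CategoryTheory Limits Matrix

section Ext

variable {R : Type} [CommRing R] {M N : ModuleCat R} (P : ProjectiveResolution M)

namespace CategoryTheory.ProjectiveResolution

theorem exactAt_linearYonedaObj_of_subsingleton_extMod {i : ℕ}
    (h : Subsingleton (extMod R M N i)) :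
    (P.complex.linearYonedaObj R N).ExactAt i := by
  rw [HomologicalComplex.exactAt_iff_isZero_homology]
  exact (ModuleCat.isZero_of_subsingleton (extMod R M N i)).of_iso (P.isoExt i N).symm

theorem eq_zero_of_d_comp_eq_zero (h : Subsingleton (extMod R M N 0))
    (φ : P.complex.X 0 ⟶ N) (hφ : P.complex.d 1 0 ≫ φ = 0) : φ = 0 := by
  have hex := P.exactAt_linearYonedaObj_of_subsingleton_extMod h
  rw [HomologicalComplex.exactAt_iff' _ 0 0 1 (by simp) (by simp),
    ShortComplex.moduleCat_exact_iff] at hex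
  obtain ⟨ψ, hψ⟩ := hex φ hφ
  have hd : (P.complex.linearYonedaObj R N).d 0 0 = 0 :=
    (P.complex.linearYonedaObj R N).shape 0 0 (by simp)
  rw [← hψ]
  exact congrArg (fun f => f.hom ψ) hd

theorem exists_d_comp_eq (h : Subsingleton (extMod R M N 1))
    (φ : P.complex.X 1 ⟶ N) (hφ : P.complex.d 2 1 ≫ φ = 0) :
    ∃ β : P.complex.X 0 ⟶ N, P.complex.d 1 0 ≫ β = φ := by
  have hex := P.exactAt_linearYonedaObj_of_subsingleton_extMod h
  rw [HomologicalComplex.exactAt_iff' _ 0 1 2 (by simp) (by simp),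
    ShortComplex.moduleCat_exact_iff] at hex
  exact hex φ hφ

theorem exists_eq_on_ker_π
    (h : Subsingleton (extMod R M N 1)) (ψ : LinearMap.ker (P.π.f 0).hom →ₗ[R] N) :
    ∃ β : P.complex.X 0 ⟶ N,
      ∀ p (hp : p ∈ LinearMap.ker (P.π.f 0).hom), β p = ψ ⟨p, hp⟩ := by
  let d₁ := (P.complex.d 1 0).hom
  have hd₁ (u : P.complex.X 1) : d₁ u ∈ LinearMap.ker (P.π.f 0).hom :=
    LinearMap.mem_ker.2 (congrArg (fun f => f.hom u) P.complex_d_comp_π_f_zero)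
  let δ := LinearMap.codRestrict _ d₁ hd₁
  obtain ⟨β, hβ⟩ := P.exists_d_comp_eq h (ModuleCat.ofHom (ψ ∘ₗ δ)) (by
    ext u
    have hδ : δ ((P.complex.d 2 1).hom u) = 0 :=
      Subtype.ext (congrArg (fun f => f.hom u) (P.complex.d_comp_d 2 1 0))
    change ψ (δ ((P.complex.d 2 1).hom u)) = 0
    rw [hδ, map_zero])
  refine ⟨β, fun p hp => ?_⟩
  obtain ⟨u, rfl⟩ := (ShortComplex.moduleCat_exact_iff _).1 P.exact₀ p hp
  exact congrArg (fun f => f.hom u) hβ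

end CategoryTheory.ProjectiveResolution

theorem hom_eq_zero_of_subsingleton_extMod_zero (h : Subsingleton (extMod R M N 0))
    (g : M ⟶ N) : g = 0 := by
  let P := ProjectiveResolution.of M
  have hπg : P.π.f 0 ≫ g = 0 := by
    exact P.eq_zero_of_d_comp_eq_zero h _
      ((reassoc_of% P.complex_d_comp_π_f_zero) g |>.trans zero_comp)
  exact (cancel_epi (P.π.f 0)).1 (hπg.trans comp_zero.symm)

theorem exists_comp_subtype_eq_of_subsingleton_extMod_one {F : Type} [AddCommGroup F]
    [Module R F] [Module.Projective R F] (K : Submodule R F)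
    (h : Subsingleton (extMod R (ModuleCat.of R (F ⧸ K)) N 1)) (g : K →ₗ[R] N) :
    ∃ f : F →ₗ[R] N, f ∘ₗ K.subtype = g := by
  let P := ProjectiveResolution.of (ModuleCat.of R (F ⧸ K))
  let π₀ := (P.π.f 0).hom
  have hπ₀ : Function.Surjective π₀ := (ModuleCat.epi_iff_surjective _).1 inferInstance
  obtain ⟨α, hα⟩ := Module.projective_lifting_property K.mkQ π₀ K.mkQ_surjective
  obtain ⟨γ, hγ⟩ := Module.projective_lifting_property π₀ K.mkQ hπ₀
  have hαK (p : P.complex.X 0) (hp : p ∈ LinearMap.ker π₀) : α p ∈ K :=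
    (Submodule.Quotient.mk_eq_zero K).1 ((LinearMap.congr_fun hα p).trans hp)
  have hγK (k : F) (hk : k ∈ K) : γ k ∈ LinearMap.ker π₀ :=
    (LinearMap.congr_fun hγ k).trans ((Submodule.Quotient.mk_eq_zero K).2 hk)
  have hε (x : F) : x - α (γ x) ∈ K := by
    have hαγ : K.mkQ (α (γ x)) = π₀ (γ x) := LinearMap.congr_fun hα (γ x)
    have hγx : π₀ (γ x) = K.mkQ x := LinearMap.congr_fun hγ x
    refine (Submodule.Quotient.mk_eq_zero K).1 ?_
    rw [Submodule.Quotient.mk_sub, ← Submodule.mkQ_apply, ← Submodule.mkQ_apply, hαγ, hγx,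
      sub_self]
  obtain ⟨β, hβ⟩ := P.exists_eq_on_ker_π h (g ∘ₗ LinearMap.restrict α hαK)
  -- On `K`, `β ∘ γ` is `g ∘ α ∘ γ`, and the second summand corrects it to `g`.
  refine ⟨β.hom ∘ₗ γ + g ∘ₗ LinearMap.codRestrict K (LinearMap.id - α ∘ₗ γ) hε, ?_⟩
  ext ⟨k, hk⟩
  have hsum :
      (⟨α (γ k), hαK _ (hγK k hk)⟩ : K) + ⟨k - α (γ k), hε k⟩ = ⟨k, hk⟩ :=
    Subtype.ext (add_sub_cancel _ _)
  simp only [LinearMap.comp_apply, LinearMap.add_apply, Submodule.subtype_apply]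
  rw [hβ _ (hγK k hk), ← hsum, map_add]
  rfl

end Ext

section Ideal

variable {R : Type} [CommRing R] (I : Ideal R)

theorem eq_zero_of_forall_mul_eq_zero_of_subsingleton_extMod_zero
    (h : Subsingleton (extMod R (ModuleCat.of R (R ⧸ I)) (ModuleCat.of R R) 0))
    {r : R} (hr : ∀ a ∈ I, a * r = 0) : r = 0 := by
  let g : R ⧸ I →ₗ[R] R :=
    I.liftQ (LinearMap.toSpanSingleton R R r) fun a ha => by simpa using hr a ha
  have hg : g (Submodule.Quotient.mk 1) = 0 := congrArg (fun f => f.hom (Submodule.Quotient.mk 1))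
    (hom_eq_zero_of_subsingleton_extMod_zero h (ModuleCat.ofHom g))
  rwa [Submodule.liftQ_apply, LinearMap.toSpanSingleton_apply, one_smul] at hg

theorem exists_eq_mul_of_subsingleton_extMod_one
    (h : Subsingleton (extMod R (ModuleCat.of R (R ⧸ I)) (ModuleCat.of R R) 1))
    (f : I →ₗ[R] R) : ∃ r : R, ∀ a : I, f a = a * r := by
  obtain ⟨g, hg⟩ := exists_comp_subtype_eq_of_subsingleton_extMod_one I h f
  refine ⟨g 1, fun a => ?_⟩
  rw [← hg, LinearMap.comp_apply, Submodule.subtype_apply, ← smul_eq_mul, ← map_smul,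
    smul_eq_mul, mul_one]

end Ideal

section FreeModule

variable {R : Type} [CommRing R] {I : Ideal R} {ι κ : Type*}

theorem eq_zero_of_forall_smul_eq_zero (hI : ∀ r : R, (∀ a ∈ I, a * r = 0) → r = 0)
    {v : ι → R} (hv : ∀ a ∈ I, a • v = 0) : v = 0 :=
  funext fun k => hI _ fun a ha => congrFun (hv a ha) k

theorem mem_range_of_forall_smul_mem_range (hI : ∀ r : R, (∀ a ∈ I, a * r = 0) → r = 0)
    (hHom : ∀ f : I →ₗ[R] R, ∃ r : R, ∀ a : I, f a = a * r)
    {L : (κ → R) →ₗ[R] (ι → R)} (hL : Function.Injective L) {x : ι → R}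
    (hx : ∀ a ∈ I, a • x ∈ LinearMap.range L) : x ∈ LinearMap.range L := by
  let e := LinearEquiv.ofInjective L hL
  let Φ : I →ₗ[R] κ → R := e.symm.toLinearMap ∘ₗ LinearMap.codRestrict _
    (LinearMap.toSpanSingleton R _ x ∘ₗ I.subtype) fun a => hx a a.2
  have hΦ (a : I) : L (Φ a) = (a : R) • x :=
    congrArg Subtype.val (e.apply_symm_apply ⟨(a : R) • x, hx a a.2⟩)
  choose y hy using fun k => hHom (LinearMap.proj k ∘ₗ Φ)
  have hxy : ∀ a ∈ I, a • (x - L y) = 0 := by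
    intro a ha
    have hΦa : Φ ⟨a, ha⟩ = a • y := funext fun k => hy k ⟨a, ha⟩
    rw [smul_sub, ← map_smul, ← hΦa, hΦ, sub_self]
  exact ⟨y, (sub_eq_zero.1 (eq_zero_of_forall_smul_eq_zero hI hxy)).symm⟩

end FreeModule

section ConsCol

variable {ι κ α : Type*} {n : ℕ} (A : Matrix ι (Fin n) α)

def consCol (x : ι → α) : Matrix ι (Fin (n + 1)) α :=
  of fun i => Fin.cons (x i) (A i)

theorem consCol_submatrix_succ (x : ι → α) (r : κ → ι) :
    (consCol A x).submatrix r Fin.succ = A.submatrix r id := by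
  ext
  simp [consCol]

theorem consCol_mulVec [CommSemiring α] (x : ι → α) (v : Fin (n + 1) → α) :
    consCol A x *ᵥ v = v 0 • x + A *ᵥ Fin.tail v := by
  rw [consCol, ← Fin.cons_self_tail v]
  exact mulVec_cons _ _ _

end ConsCol

theorem det_smul_eq_zero_of_mulVec_eq_zero {m α : Type*} [Fintype m] [DecidableEq m]
    [CommRing α] {M : Matrix m m α} {v : m → α} (hv : M *ᵥ v = 0) : M.det • v = 0 := by
  rw [← one_mulVec v, ← smul_mulVec, ← adjugate_mul, ← mulVec_mulVec, hv, mulVec_zero]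

section Matrix

variable {R : Type} [CommRing R] {n : ℕ} (A : Matrix (Fin (n + 1)) (Fin n) R)

theorem rowMap_apply (b x : Fin (n + 1) → R) : rowMap b x = b ⬝ᵥ x := by
  simp [rowMap, dotProduct]

theorem range_rowMap (b : Fin (n + 1) → R) :
    LinearMap.range (rowMap b) = Ideal.span (Set.range b) := by
  rw [Ideal.span, ← Fintype.range_linearCombination]
  congr 1
  ext x
  simp [rowMap_apply, Fintype.linearCombination_apply, dotProduct, mul_comm]

def signedMinors : Fin (n + 1) → R :=
  fun i => (-1) ^ (i : ℕ) * (A.submatrix i.succAbove id).det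

theorem span_range_signedMinors : Ideal.span (Set.range (signedMinors A)) = minorsIdeal A := by
  have hsign (i : Fin (n + 1)) : ((-1 : R) ^ (i : ℕ)) * (-1) ^ (i : ℕ) = 1 := by
    rw [← pow_add, Even.neg_one_pow ⟨_, rfl⟩]
  apply le_antisymm <;> rw [minorsIdeal, Ideal.span_le] <;> rintro _ ⟨i, rfl⟩
  · exact Ideal.mul_mem_left _ _ (Ideal.subset_span ⟨i, rfl⟩)
  · dsimp only
    rw [← one_mul (A.submatrix _ _).det, ← hsign i, mul_assoc]
    exact Ideal.mul_mem_left _ _ (Ideal.subset_span ⟨i, rfl⟩)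

theorem det_consCol (x : Fin (n + 1) → R) : (consCol A x).det = signedMinors A ⬝ᵥ x := by
  rw [det_succ_column_zero, dotProduct]
  refine Finset.sum_congr rfl fun i _ => ?_
  rw [consCol_submatrix_succ, signedMinors]
  simp only [consCol, of_apply, Fin.cons_zero]
  ring

theorem signedMinors_vecMul : signedMinors A ᵥ* A = 0 := by
  ext j
  rw [vecMul, ← det_consCol]
  exact det_zero_of_column_eq (i := 0) (j := j.succ) (Fin.succ_ne_zero j).symm fun k => rfl

theorem adjugate_consCol_zero (x : Fin (n + 1) → R) (j : Fin (n + 1)) :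
    (consCol A x).adjugate 0 j = signedMinors A j := by
  rw [adjugate_fin_succ_eq_det_submatrix, Fin.succAbove_zero, consCol_submatrix_succ]
  simp [signedMinors]

theorem signedMinors_smul_mem_range {x : Fin (n + 1) → R} (hx : signedMinors A ⬝ᵥ x = 0)
    (j : Fin (n + 1)) : signedMinors A j • x ∈ LinearMap.range A.mulVecLin := by
  have hcol : consCol A x *ᵥ (fun k => (consCol A x).adjugate k j) = 0 := by
    ext i
    have hentry := congrFun (congrFun (mul_adjugate (consCol A x)) i) j
    rw [det_consCol, hx, zero_smul] at hentry
    exact hentry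
  rw [consCol_mulVec, adjugate_consCol_zero, add_eq_zero_iff_eq_neg, ← mulVec_neg] at hcol
  exact ⟨_, hcol.symm⟩

end Matrix

section HilbertBurch

variable {R : Type} [CommRing R] {n : ℕ} (A : Matrix (Fin (n + 1)) (Fin n) R)

theorem mulVecLin_injective (hI : ∀ r : R, (∀ a ∈ minorsIdeal A, a * r = 0) → r = 0) :
    Function.Injective A.mulVecLin := by
  rw [← LinearMap.ker_eq_bot, Submodule.eq_bot_iff]
  intro v hv
  have hann : minorsIdeal A ≤ (R ∙ v).annihilator := by
    rw [minorsIdeal, Ideal.span_le]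
    rintro _ ⟨i, rfl⟩
    have hvi : A.submatrix i.succAbove id *ᵥ v = 0 := funext fun k => congrFun hv (i.succAbove k)
    exact (Submodule.mem_annihilator_span_singleton _ _).2 (det_smul_eq_zero_of_mulVec_eq_zero hvi)
  exact eq_zero_of_forall_smul_eq_zero hI fun a ha =>
    (Submodule.mem_annihilator_span_singleton _ _).1 (hann ha)

theorem range_mulVecLin_le_ker_rowMap_signedMinors :
    LinearMap.range A.mulVecLin ≤ LinearMap.ker (rowMap (signedMinors A)) := by
  rintro _ ⟨c, rfl⟩
  rw [LinearMap.mem_ker, rowMap_apply, mulVecLin_apply, dotProduct_mulVec, signedMinors_vecMul,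
    zero_dotProduct]

theorem ker_rowMap_signedMinors_le_range
    (hI : ∀ r : R, (∀ a ∈ minorsIdeal A, a * r = 0) → r = 0)
    (hHom : ∀ f : minorsIdeal A →ₗ[R] R, ∃ r : R, ∀ a : minorsIdeal A, f a = a * r) :
    LinearMap.ker (rowMap (signedMinors A)) ≤ LinearMap.range A.mulVecLin := by
  intro x hx
  rw [LinearMap.mem_ker, rowMap_apply] at hx
  have hcolon : minorsIdeal A ≤ (LinearMap.range A.mulVecLin).colon {x} := by
    rw [← span_range_signedMinors, Ideal.span_le]
    rintro _ ⟨j, rfl⟩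
    exact Submodule.mem_colon_singleton.2 (signedMinors_smul_mem_range A hx j)
  exact mem_range_of_forall_smul_mem_range hI hHom (mulVecLin_injective A hI) fun a ha =>
    Submodule.mem_colon_singleton.1 (hcolon ha)

end HilbertBurch

theorem hilbert_burch_converse_general
    (R : Type) [CommRing R]
    {n : ℕ} (A : Matrix (Fin (n + 1)) (Fin n) R)
    (hgrade : gradeGEtwo R (minorsIdeal A)) :
    -- 0 → Rⁿ →A R^{n+1} →B R → 0 is a free resolution of R/I_n(A), where the i-th
    -- entry of B is (−1)^{i−1}·det(A_i) (one-based indexing; here i is zero-based)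
    Function.Injective (Matrix.mulVecLin A) ∧
      LinearMap.range (Matrix.mulVecLin A) =
        LinearMap.ker (rowMap fun i => (-1 : R) ^ (i : ℕ) *
          (A.submatrix i.succAbove id).det) ∧
      LinearMap.range (rowMap fun i => (-1 : R) ^ (i : ℕ) *
          (A.submatrix i.succAbove id).det) = minorsIdeal A := by
  have hI : ∀ r : R, (∀ a ∈ minorsIdeal A, a * r = 0) → r = 0 := fun _ hr =>
    eq_zero_of_forall_mul_eq_zero_of_subsingleton_extMod_zero _ (hgrade 0 two_pos) hr
  have hHom := exists_eq_mul_of_subsingleton_extMod_one _ (hgrade 1 one_lt_two)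
  refine ⟨mulVecLin_injective A hI, ?_, ?_⟩
  · exact le_antisymm (range_mulVecLin_le_ker_rowMap_signedMinors A)
      (ker_rowMap_signedMinors_le_range A hI hHom)
  · rw [range_rowMap, ← span_range_signedMinors]
    rfl

theorem hilbert_burch_converse
    (R : Type) [CommRing R] [IsNoetherianRing R] [IsLocalRing R]
    {n : ℕ} (A : Matrix (Fin (n + 1)) (Fin n) R)
    (hgrade : gradeGEtwo R (minorsIdeal A)) :
    -- 0 → Rⁿ →A R^{n+1} →B R → 0 is a free resolution of R/I_n(A), where the i-th
    -- entry of B is (−1)^{i−1}·det(A_i) (one-based indexing; here i is zero-based)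
    Function.Injective (Matrix.mulVecLin A) ∧
      LinearMap.range (Matrix.mulVecLin A) =
        LinearMap.ker (rowMap fun i => (-1 : R) ^ (i : ℕ) *
          (A.submatrix i.succAbove id).det) ∧
      LinearMap.range (rowMap fun i => (-1 : R) ^ (i : ℕ) *
          (A.submatrix i.succAbove id).det) = minorsIdeal A :=
  hilbert_burch_converse_general R A hgrade
end
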